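/- arXiv:0902.2520 — 3 statements merged into one kernel-verified Lean document; each statement's English description precedes it below -/
import Mathlib

section
/- For all real x > 0, log(x+1) - log x - ψ'(x+1) > 0, where ψ' is the trigamma function. -/
open Real Filter

/-- The digamma function ψ(x) = Γ′(x)/Γ(x). -/
noncomputable def digamma (x : ℝ) : ℝ := deriv Real.Gamma x / Real.Gamma x

/-!
By Bohr–Mollerup, `log Γ` is the pointwise limit on `(0, ∞)` of the convex functions
`logGammaSeq · n`, and derivatives of convex functions pass to pointwise limits. Doing this twice
gives `ψ'(y) = ∑ₘ (y + m)⁻²`, and comparing with the telescoping sum of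
`(y + m - 1/2)⁻¹ - (y + m + 1/2)⁻¹` gives `ψ'(x + 1) ≤ (x + 1/2)⁻¹`. This is strictly below
`log (1 + 1/x) = ∑ₖ 2 / ((2k + 1) (2x + 1)^(2k + 1))`, whose first term is already `(x + 1/2)⁻¹`.
-/

open Set Topology Real.BohrMollerup

theorem tendsto_of_hasDerivAt_of_convexOn {ι : Type*} {l : Filter ι} {S : Set ℝ}
    {g : ι → ℝ → ℝ} {g' : ι → ℝ} {f : ℝ → ℝ} {f' y : ℝ} (hS : S ∈ 𝓝 y)
    (hconv : ∀ i, ConvexOn ℝ S (g i)) (hg : ∀ i, HasDerivAt (g i) (g' i) y)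
    (hlim : ∀ z ∈ S, Tendsto (fun i => g i z) l (𝓝 (f z))) (hf : HasDerivAt f f' y) :
    Tendsto g' l (𝓝 f') := by
  have hy : y ∈ S := mem_of_mem_nhds hS
  have hslope := hasDerivAt_iff_tendsto_slope.mp hf
  have tendsto_slope (z : ℝ) (hz : z ∈ S) :
      Tendsto (fun i => slope (g i) y z) l (𝓝 (slope f y z)) := by
    simp only [slope_def_field]
    exact ((hlim z hz).sub (hlim y hy)).div_const _
  rw [tendsto_order]
  constructor
  · intro b hb
    have hz : ∀ᶠ z in 𝓝[<] y, b < slope f y z ∧ z ∈ S ∧ z < y := by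
      filter_upwards [(hslope.mono_left (nhdsWithin_mono y fun z hz => ne_of_lt hz)).eventually
        (lt_mem_nhds hb), nhdsWithin_le_nhds hS, self_mem_nhdsWithin] with z h₁ h₂ h₃
      exact ⟨h₁, h₂, h₃⟩
    obtain ⟨z, hbz, hzS, hzy⟩ := hz.exists
    filter_upwards [(tendsto_slope z hzS).eventually (lt_mem_nhds hbz)] with i hi
    rw [slope_comm] at hi
    exact hi.trans_le ((hconv i).slope_le_of_hasDerivAt hzS hy hzy (hg i))
  · intro b hb
    have hz : ∀ᶠ z in 𝓝[>] y, slope f y z < b ∧ z ∈ S ∧ y < z := by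
      filter_upwards [(hslope.mono_left (nhdsWithin_mono y fun z hz => ne_of_gt hz)).eventually
        (gt_mem_nhds hb), nhdsWithin_le_nhds hS, self_mem_nhdsWithin] with z h₁ h₂ h₃
      exact ⟨h₁, h₂, h₃⟩
    obtain ⟨z, hbz, hzS, hyz⟩ := hz.exists
    filter_upwards [(tendsto_slope z hzS).eventually (gt_mem_nhds hbz)] with i hi
    exact ((hconv i).le_slope_of_hasDerivAt hy hzS hyz (hg i)).trans_lt hi

theorem ConvexOn.fun_sum {𝕜 E β ι : Type*} [Semiring 𝕜] [PartialOrder 𝕜] [AddCommMonoid E]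
    [AddCommMonoid β] [PartialOrder β] [IsOrderedAddMonoid β] [SMul 𝕜 E] [Module 𝕜 β]
    {s : Set E} (hs : Convex 𝕜 s) {t : Finset ι} {f : ι → E → β}
    (hf : ∀ i ∈ t, ConvexOn 𝕜 s (f i)) : ConvexOn 𝕜 s fun x => ∑ i ∈ t, f i x := by
  rw [← Finset.sum_fn]
  exact Finset.sum_induction f (ConvexOn 𝕜 s) (fun _ _ => ConvexOn.add) (convexOn_const 0 hs) hf

theorem ConvexOn.comp_add_const_Ioi {f : ℝ → ℝ} (hf : ConvexOn ℝ (Ioi 0) f) {c : ℝ}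
    (hc : 0 ≤ c) : ConvexOn ℝ (Ioi 0) fun z => f (z + c) :=
  (hf.translate_left c).subset (fun z (hz : 0 < z) => show 0 < c + z by positivity)
    (convex_Ioi 0)

theorem convexOn_inv_Ioi : ConvexOn ℝ (Ioi 0) fun x : ℝ => x⁻¹ := by
  simpa using convexOn_zpow (𝕜 := ℝ) (-1)

theorem Real.analyticAt_Gamma {x : ℝ} (hx : 0 < x) : AnalyticAt ℝ Gamma x := by
  have hGC : AnalyticOnNhd ℂ Complex.Gamma {z | 0 < z.re} :=
    DifferentiableOn.analyticOnNhd (fun z hz => (Complex.differentiableAt_Gamma z fun m h => by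
        simp only [h, mem_ofPred_eq, Complex.neg_re, Complex.natCast_re] at hz
        linarith [(Nat.cast_nonneg m : (0 : ℝ) ≤ m)]).differentiableWithinAt)
      (isOpen_lt continuous_const Complex.continuous_re)
  have hre : AnalyticAt ℝ (fun t : ℝ => (Complex.Gamma t).re) x :=
    (Complex.reCLM.analyticAt _).comp
      ((hGC x (by simpa using hx)).restrictScalars.comp (Complex.ofRealCLM.analyticAt x))
  simpa only [Complex.Gamma_ofReal, Complex.ofReal_re] using hre

theorem analyticAt_digamma {x : ℝ} (hx : 0 < x) : AnalyticAt ℝ digamma x :=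
  have hG : AnalyticOnNhd ℝ Gamma (Ioi 0) := fun _ ht => analyticAt_Gamma ht
  (hG.deriv x hx).div (hG x hx) (Gamma_pos_of_pos hx).ne'

theorem hasDerivAt_log_Gamma {x : ℝ} (hx : 0 < x) :
    HasDerivAt (fun t => log (Gamma t)) (digamma x) x :=
  (analyticAt_Gamma hx).differentiableAt.hasDerivAt.log (Gamma_pos_of_pos hx).ne'

theorem Real.BohrMollerup.convexOn_logGammaSeq (n : ℕ) :
    ConvexOn ℝ (Ioi 0) fun z => logGammaSeq z n := by
  have hlin : ConvexOn ℝ (Ioi 0) fun z : ℝ => z * log n + log n.factorial :=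
    ((LinearMap.mulRight ℝ (log n)).convexOn (convex_Ioi 0)).add
      (convexOn_const _ (convex_Ioi 0))
  have hsum : ConvexOn ℝ (Ioi 0) fun z : ℝ => ∑ m ∈ Finset.range (n + 1), -log (z + m) :=
    ConvexOn.fun_sum (convex_Ioi 0) fun m _ =>
      strictConcaveOn_log_Ioi.concaveOn.neg.comp_add_const_Ioi m.cast_nonneg
  exact (hlin.add hsum).congr fun z _ => by
    simp only [logGammaSeq, Pi.add_apply, Finset.sum_neg_distrib, sub_eq_add_neg]

theorem Real.BohrMollerup.hasDerivAt_logGammaSeq (n : ℕ) {z : ℝ} (hz : 0 < z) :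
    HasDerivAt (fun w => logGammaSeq w n) (log n - ∑ m ∈ Finset.range (n + 1), (z + m)⁻¹) z := by
  have hsum : HasDerivAt (fun w : ℝ => ∑ m ∈ Finset.range (n + 1), log (w + m))
      (∑ m ∈ Finset.range (n + 1), (z + m)⁻¹) z :=
    HasDerivAt.fun_sum fun m _ => by
      simpa [one_div] using ((hasDerivAt_id z).add_const (m : ℝ)).log (by positivity)
  exact ((((hasDerivAt_id' z).mul_const (log n)).add_const _).sub hsum).congr_deriv (by ring)

theorem tendsto_log_sub_sum_inv_digamma {z : ℝ} (hz : 0 < z) :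
    Tendsto (fun n : ℕ => log n - ∑ m ∈ Finset.range (n + 1), (z + m)⁻¹) atTop
      (𝓝 (digamma z)) :=
  tendsto_of_hasDerivAt_of_convexOn (Ioi_mem_nhds hz) convexOn_logGammaSeq
    (fun n => hasDerivAt_logGammaSeq n hz) (fun _ hw => tendsto_log_gamma hw)
    (hasDerivAt_log_Gamma hz)

theorem tendsto_sum_inv_sq_deriv_digamma {y : ℝ} (hy : 0 < y) :
    Tendsto (fun n : ℕ => ∑ m ∈ Finset.range (n + 1), ((y + m) ^ 2)⁻¹) atTop
      (𝓝 (deriv digamma y)) := by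
  have hconv (n : ℕ) :
      ConvexOn ℝ (Ioi 0) fun z : ℝ => ∑ m ∈ Finset.range (n + 1), (z + m)⁻¹ - log n :=
    (ConvexOn.fun_sum (convex_Ioi 0) fun (m : ℕ) _ =>
      convexOn_inv_Ioi.comp_add_const_Ioi m.cast_nonneg).sub (concaveOn_const _ (convex_Ioi 0))
  have hderiv (n : ℕ) : HasDerivAt (fun z : ℝ => ∑ m ∈ Finset.range (n + 1), (z + m)⁻¹ - log n)
      (-∑ m ∈ Finset.range (n + 1), ((y + m) ^ 2)⁻¹) y := by
    have := HasDerivAt.fun_sum (u := Finset.range (n + 1)) fun (m : ℕ) _ =>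
      (hasDerivAt_inv (by positivity)).comp y ((hasDerivAt_id' y).add_const (m : ℝ))
    simpa only [Function.comp_def, mul_one, Finset.sum_neg_distrib] using this.sub_const (log n)
  have hlim (z : ℝ) (hz : z ∈ Ioi 0) : Tendsto
      (fun n : ℕ => ∑ m ∈ Finset.range (n + 1), (z + m)⁻¹ - log n) atTop (𝓝 (-digamma z)) := by
    simpa only [neg_sub] using (tendsto_log_sub_sum_inv_digamma hz).neg
  have := tendsto_of_hasDerivAt_of_convexOn (Ioi_mem_nhds hy) hconv hderiv hlim
    (analyticAt_digamma hy).differentiableAt.hasDerivAt.neg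
  simpa using this.neg

theorem inv_sq_le_inv_sub_half_sub_inv_add_half {t : ℝ} (ht : 1 / 2 < t) :
    (t ^ 2)⁻¹ ≤ (t - 1 / 2)⁻¹ - (t + 1 / 2)⁻¹ := by
  have h₁ : t - 1 / 2 ≠ 0 := by linarith
  have h₂ : t + 1 / 2 ≠ 0 := by linarith
  calc (t ^ 2)⁻¹ ≤ (t ^ 2 - 1 / 4)⁻¹ := inv_anti₀ (by nlinarith) (by linarith)
    _ = (t - 1 / 2)⁻¹ - (t + 1 / 2)⁻¹ := by rw [inv_sub_inv h₁ h₂]; ring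

theorem sum_range_inv_sq_add_le {y : ℝ} (hy : 1 / 2 < y) (N : ℕ) :
    ∑ m ∈ Finset.range N, ((y + m) ^ 2)⁻¹ ≤ (y - 1 / 2)⁻¹ := by
  set u : ℕ → ℝ := fun m => (y + m - 1 / 2)⁻¹
  have hu (m : ℕ) : 0 ≤ u m := inv_nonneg.2 (by linarith [(m.cast_nonneg : (0 : ℝ) ≤ m)])
  calc ∑ m ∈ Finset.range N, ((y + m) ^ 2)⁻¹
      ≤ ∑ m ∈ Finset.range N, (u m - u (m + 1)) := Finset.sum_le_sum fun m _ => by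
        have := inv_sq_le_inv_sub_half_sub_inv_add_half
          (show 1 / 2 < y + m by linarith [(m.cast_nonneg : (0 : ℝ) ≤ m)])
        simpa only [u, Nat.cast_succ, add_assoc, add_sub_assoc,
          show (1 : ℝ) - 1 / 2 = 1 / 2 by norm_num] using this
    _ = u 0 - u N := Finset.sum_range_sub' u N
    _ ≤ (y - 1 / 2)⁻¹ := by simpa [u] using hu N

theorem deriv_digamma_le_inv_sub_half {y : ℝ} (hy : 1 / 2 < y) :
    deriv digamma y ≤ (y - 1 / 2)⁻¹ :=
  le_of_tendsto' (tendsto_sum_inv_sq_deriv_digamma (by linarith)) fun n =>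
    sum_range_inv_sq_add_le hy (n + 1)

theorem inv_add_half_lt_log_one_add_inv {x : ℝ} (hx : 0 < x) :
    (x + 1 / 2)⁻¹ < log (1 + x⁻¹) := by
  have h := sum_le_hasSum (Finset.range 2) (fun _ _ => by positivity) (hasSum_log_one_add_inv hx)
  simp only [Finset.sum_range_succ, Finset.sum_range_zero] at h
  have h₀ : (2 : ℝ) * (1 / (2 * (0 : ℕ) + 1)) * (1 / (2 * x + 1)) ^ (2 * 0 + 1) =
      (x + 1 / 2)⁻¹ := by
    rw [show x + 1 / 2 = (2 * x + 1) / 2 by ring, inv_div]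
    norm_num [div_eq_mul_inv]
  have h₁ : 0 < (2 : ℝ) * (1 / (2 * (1 : ℕ) + 1)) * (1 / (2 * x + 1)) ^ (2 * 1 + 1) := by positivity
  linarith

theorem log_succ_sub_log_sub_trigamma_pos (x : ℝ) (hx : 0 < x) :
    Real.log (x + 1) - Real.log x - deriv digamma (x + 1) > 0 := by
  have hlog : log (x + 1) - log x = log (1 + x⁻¹) := by
    rw [← log_div (by positivity) hx.ne', add_div, div_self hx.ne', one_div]
  have htri : deriv digamma (x + 1) ≤ (x + 1 / 2)⁻¹ := by
    convert deriv_digamma_le_inv_sub_half (show 1 / 2 < x + 1 by linarith) using 2; ring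
  linarith [inv_add_half_lt_log_one_add_inv hx]
end

section
/- For all real x > 0, θ₁(x+1) - θ₁(x) < 0, i.e., x(log x - ψ(x)) is strictly larger than (x+1)(log(x+1) - ψ(x+1)). -/
open Real Filter

/-!
Write `Δ(y) = θ₁(y) - θ₁(y + 1)`. The recurrence `ψ(y + 1) = ψ(y) + 1 / y` turns
`Δ(y) - Δ(y + 1)` into the second difference of `y log y` at `y` minus `1 / (y + 1)`. With
`t = 1 / (y + 1)` this second difference is `(y + 1) φ(t)`, where
`φ(t) = (1 + t) log (1 + t) + (1 - t) log (1 - t) > t²`, so `Δ` strictly decreases along `y + ℕ`.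
Convexity of `log Γ` gives `ψ(y + 1) ≥ log y`, hence `Δ(y) ≥ -1 / y → 0`. Thus `Δ ≥ 0` on
`(0, ∞)`, and `Δ(x) > Δ(x + 1) ≥ 0`.
-/

open Set Topology

noncomputable def theta₁ (x : ℝ) : ℝ := x * (log x - digamma x)

lemma ne_neg_natCast_of_pos {y : ℝ} (hy : 0 < y) (m : ℕ) : y ≠ -m :=
  (hy.trans_le' (by simp)).ne'

lemma Real.deriv_Gamma_add_one {y : ℝ} (hy : ∀ m : ℕ, y ≠ -m) :
    deriv Gamma (y + 1) = Gamma y + y * deriv Gamma y := by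
  have hy0 : y ≠ 0 := by simpa using hy 0
  have hshift : (fun z => Gamma (z + 1)) =ᶠ[𝓝 y] fun z => z * Gamma z := by
    filter_upwards [isOpen_ne.mem_nhds hy0] with z hz using Gamma_add_one hz
  rw [← deriv_comp_add_const, hshift.deriv_eq,
    deriv_fun_mul differentiableAt_fun_id (differentiableAt_Gamma hy)]
  simp

lemma digamma_add_one {y : ℝ} (hy : ∀ m : ℕ, y ≠ -m) :
    digamma (y + 1) = digamma y + y⁻¹ := by
  have hy0 : y ≠ 0 := by simpa using hy 0
  have hΓ := Gamma_ne_zero hy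
  rw [digamma, digamma, deriv_Gamma_add_one hy, Gamma_add_one hy0]
  field_simp
  ring

lemma log_le_digamma_add_one {y : ℝ} (hy : 0 < y) : log y ≤ digamma (y + 1) := by
  have hy1 : 0 < y + 1 := by linarith
  have hnot := ne_neg_natCast_of_pos hy1
  rw [digamma, ← logDeriv_apply,
    ← deriv_log_comp_eq_logDeriv (differentiableAt_Gamma hnot) (Gamma_ne_zero hnot)]
  have hslope := convexOn_log_Gamma.slope_le_deriv (mem_Ioi.2 hy) (mem_Ioi.2 hy1)
    (lt_add_one y) ((differentiableAt_Gamma hnot).log (Gamma_ne_zero hnot))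
  rwa [slope_def_field, add_sub_cancel_left, div_one, Function.comp_apply, Function.comp_apply,
    Gamma_add_one hy.ne', log_mul hy.ne' (Gamma_pos_of_pos hy).ne', add_sub_cancel_right] at hslope

lemma two_mul_lt_log_one_add_sub_log_one_sub {t : ℝ} (ht₀ : 0 < t) (ht₁ : t < 1) :
    2 * t < log (1 + t) - log (1 - t) := by
  have hsum := hasSum_log_sub_log_of_abs_lt_one (abs_lt.2 ⟨by linarith, ht₁⟩)
  have := sum_le_hasSum (Finset.range 2) (fun k _ => by positivity) hsum
  norm_num [Finset.sum_range_succ] at this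
  nlinarith [pow_pos ht₀ 3]

lemma sq_lt_one_add_mul_log_one_add_add_one_sub_mul_log_one_sub {t : ℝ} (ht₀ : 0 < t)
    (ht₁ : t < 1) : t ^ 2 < (1 + t) * log (1 + t) + (1 - t) * log (1 - t) := by
  let φ : ℝ → ℝ := fun s => (1 + s) * log (1 + s) + (1 - s) * log (1 - s) - s ^ 2
  have hφ : ∀ s ∈ Ico (0 : ℝ) 1, HasDerivAt φ (log (1 + s) - log (1 - s) - 2 * s) s := by
    intro s ⟨hs₀, hs₁⟩
    have hplus : HasDerivAt (fun s : ℝ => 1 + s) 1 s := (hasDerivAt_id s).const_add 1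
    have hminus : HasDerivAt (fun s : ℝ => 1 - s) (-1) s := by
      simpa using (hasDerivAt_id s).const_sub 1
    refine (((hplus.fun_mul (hplus.log (by linarith))).fun_add
      (hminus.fun_mul (hminus.log (by linarith)))).fun_sub (hasDerivAt_pow 2 s)).congr_deriv ?_
    field_simp
    ring
  have hmono : StrictMonoOn φ (Ico 0 1) := by
    refine strictMonoOn_of_deriv_pos (convex_Ico 0 1)
      (fun s hs => (hφ s hs).continuousAt.continuousWithinAt) fun s hs => ?_
    rw [interior_Ico] at hs
    rw [(hφ s (Ioo_subset_Ico_self hs)).deriv]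
    linarith [two_mul_lt_log_one_add_sub_log_one_sub hs.1 hs.2]
  have := hmono (left_mem_Ico.2 one_pos) ⟨ht₀.le, ht₁⟩ ht₀
  norm_num [φ] at this
  linarith

lemma inv_add_one_lt_mul_log_second_diff {y : ℝ} (hy : 0 < y) :
    (y + 1)⁻¹ < (y + 2) * log (y + 2) - 2 * ((y + 1) * log (y + 1)) + y * log y := by
  set t := (y + 1)⁻¹
  have hy₁ : 0 < y + 1 := by linarith
  have ht₀ : 0 < t := by positivity
  have ht₁ : t < 1 := inv_lt_one_of_one_lt₀ (by linarith)
  have hmul : (y + 1) * t = 1 := mul_inv_cancel₀ hy₁.ne'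
  have hupper : y + 2 = (y + 1) * (1 + t) := by linear_combination -hmul
  have hlower : y = (y + 1) * (1 - t) := by linear_combination hmul
  have hsecond : (y + 2) * log (y + 2) - 2 * ((y + 1) * log (y + 1)) + y * log y
      = (y + 1) * ((1 + t) * log (1 + t) + (1 - t) * log (1 - t)) := by
    have hlog_upper : log (y + 2) = log (y + 1) + log (1 + t) := by
      rw [hupper, log_mul hy₁.ne' (by linarith)]
    have hlog_lower : log y = log (y + 1) + log (1 - t) := by
      conv_lhs => rw [hlower]
      exact log_mul hy₁.ne' (by linarith)
    rw [hlog_upper, hlog_lower]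
    linear_combination (log (1 - t) - log (1 + t)) * hmul
  rw [hsecond]
  calc t = (y + 1) * t ^ 2 := by linear_combination -t * hmul
    _ < _ := mul_lt_mul_of_pos_left
      (sq_lt_one_add_mul_log_one_add_add_one_sub_mul_log_one_sub ht₀ ht₁) hy₁

lemma theta₁_sub_theta₁_add_one {y : ℝ} (hy : ∀ m : ℕ, y ≠ -m) :
    theta₁ y - theta₁ (y + 1) = digamma (y + 1) + 1 - ((y + 1) * log (y + 1) - y * log y) := by
  have hy0 : y ≠ 0 := by simpa using hy 0
  rw [theta₁, theta₁, digamma_add_one hy]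
  field_simp
  ring

lemma neg_inv_le_theta₁_sub_theta₁_add_one {y : ℝ} (hy : 0 < y) :
    -y⁻¹ ≤ theta₁ y - theta₁ (y + 1) := by
  have hlog : log (y + 1) - log y ≤ y⁻¹ := by
    rw [← log_div (by linarith) hy.ne']
    calc log ((y + 1) / y) ≤ (y + 1) / y - 1 := log_le_sub_one_of_pos (by positivity)
      _ = y⁻¹ := by field_simp; ring
  have hmul : (y + 1) * y⁻¹ = 1 + y⁻¹ := by field_simp
  rw [theta₁_sub_theta₁_add_one (ne_neg_natCast_of_pos hy)]
  linarith [log_le_digamma_add_one hy, mul_le_mul_of_nonneg_left hlog (by linarith : 0 ≤ y + 1)]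

lemma theta₁_sub_theta₁_add_one_lt {y : ℝ} (hy : 0 < y) :
    theta₁ (y + 1) - theta₁ (y + 1 + 1) < theta₁ y - theta₁ (y + 1) := by
  have hy₁ := ne_neg_natCast_of_pos (by linarith : 0 < y + 1)
  rw [theta₁_sub_theta₁_add_one (ne_neg_natCast_of_pos hy), theta₁_sub_theta₁_add_one hy₁,
    digamma_add_one hy₁, show y + 1 + 1 = y + 2 by ring]
  linarith [inv_add_one_lt_mul_log_second_diff hy]

lemma theta₁_add_one_le_theta₁ {y : ℝ} (hy : 0 < y) : theta₁ (y + 1) ≤ theta₁ y := by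
  let gap : ℕ → ℝ := fun n => theta₁ (y + n) - theta₁ (y + n + 1)
  have hpos : ∀ n : ℕ, 0 < y + n := fun n => by positivity
  have hanti : Antitone gap := antitone_nat_of_succ_le fun n => by
    simpa [gap, add_assoc] using (theta₁_sub_theta₁_add_one_lt (hpos n)).le
  have hlim : Tendsto (fun n : ℕ => -(y + n)⁻¹) atTop (𝓝 0) := by
    simpa using (tendsto_inv_atTop_zero.comp
      (tendsto_atTop_add_const_left _ y tendsto_natCast_atTop_atTop)).neg
  have hgap : 0 ≤ gap 0 := le_of_tendsto' hlim fun n =>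
    (neg_inv_le_theta₁_sub_theta₁_add_one (hpos n)).trans (hanti n.zero_le)
  simpa [gap] using hgap

theorem theta_diff_neg (x : ℝ) (hx : 0 < x) :
    (x + 1) * (Real.log (x + 1) - digamma (x + 1)) - x * (Real.log x - digamma x) < 0 := by
  have hstep := theta₁_sub_theta₁_add_one_lt hx
  have hgap := theta₁_add_one_le_theta₁ (y := x + 1) (by linarith)
  change theta₁ (x + 1) - theta₁ x < 0
  linarith
end

section
/- If α > 1 is a real number, then the function θ_α(x) = x^α (log x - ψ(x)) is not completely monotonic on (0, ∞); in fact θ_α(x) tends to infinity as x → ∞, contradicting decreasing monotonicity. -/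
open Real Filter

lemma gamma_diff {x : ℝ} (hx : 0 < x) : DifferentiableAt ℝ Real.Gamma x :=
  Real.differentiableAt_Gamma fun m =>
    (lt_of_le_of_lt (neg_nonpos.mpr (Nat.cast_nonneg m)) hx).ne'

lemma logGamma_hasDeriv {x : ℝ} (hx : 0 < x) :
    HasDerivAt (Real.log ∘ Real.Gamma) (digamma x) x := by
  have h := (gamma_diff hx).hasDerivAt
  have := h.log (Real.Gamma_pos_of_pos hx).ne'
  exact this

lemma digamma_le_log {x : ℝ} (hx : 0 < x) : digamma x ≤ Real.log x := by
  have hconv := Real.convexOn_log_Gamma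
  have h := hconv.le_slope_of_hasDerivAt (Set.mem_Ioi.mpr hx)
    (Set.mem_Ioi.mpr (by linarith : (0:ℝ) < x + 1)) (by linarith) (logGamma_hasDeriv hx)
  have hs : slope (Real.log ∘ Real.Gamma) x (x + 1) = Real.log x := by
    rw [slope_def_field]
    simp only [Function.comp_apply, Real.Gamma_add_one hx.ne']
    rw [Real.log_mul hx.ne' (Real.Gamma_pos_of_pos hx).ne']
    field_simp
    ring
  rwa [hs] at h

lemma digamma_add_one_s17 {x : ℝ} (hx : 0 < x) : digamma (x + 1) = digamma x + 1 / x := by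
  have hG := (gamma_diff hx).hasDerivAt
  have h1 : HasDerivAt (fun y => Real.Gamma (y + 1)) (deriv Real.Gamma (x + 1)) x := by
    have := ((gamma_diff (by linarith : (0:ℝ) < x + 1)).hasDerivAt).comp x
      ((hasDerivAt_id x).add_const 1)
    simpa [Function.comp_def] using this
  have h2 : HasDerivAt (fun y => Real.Gamma (y + 1)) (Real.Gamma x + x * deriv Real.Gamma x) x := by
    have hmul : HasDerivAt (fun y => y * Real.Gamma y)
        (1 * Real.Gamma x + x * deriv Real.Gamma x) x := (hasDerivAt_id x).mul hG
    have heq : (fun y => Real.Gamma (y + 1)) =ᶠ[nhds x] fun y => y * Real.Gamma y := by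
      filter_upwards [eventually_gt_nhds hx] with y hy
      exact Real.Gamma_add_one hy.ne'
    simpa using hmul.congr_of_eventuallyEq heq
  have hd : deriv Real.Gamma (x + 1) = Real.Gamma x + x * deriv Real.Gamma x :=
    h1.unique h2
  have hΓpos := Real.Gamma_pos_of_pos hx
  rw [digamma, digamma, hd, Real.Gamma_add_one hx.ne']
  field_simp
  ring

lemma digamma_add_nat {x : ℝ} (hx : 0 < x) (n : ℕ) :
    digamma (x + n) = digamma x + ∑ k ∈ Finset.range n, 1 / (x + k) := by
  induction n with
  | zero => simp
  | succ n ih =>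
    have hxn : 0 < x + n := by positivity
    have : digamma (x + n + 1) = digamma (x + n) + 1 / (x + n) := digamma_add_one_s17 hxn
    rw [Finset.sum_range_succ, ← add_assoc, ← ih, ← this]
    congr 1
    push_cast
    ring

lemma log_le_half {u : ℝ} (hu : 1 ≤ u) : Real.log u ≤ (u - u⁻¹) / 2 := by
  set g : ℝ → ℝ := fun y => (y - y⁻¹) / 2 - Real.log y with hg
  have key : MonotoneOn g (Set.Ici 1) := by
    apply monotoneOn_of_deriv_nonneg (convex_Ici 1)
    · apply ContinuousOn.sub
      · exact (continuousOn_id.sub (continuousOn_id.inv₀ fun y hy =>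
          ne_of_gt (lt_of_lt_of_le zero_lt_one hy))).div_const 2
      · exact Real.continuousOn_log.mono fun y hy => by simp at hy ⊢; linarith
    · intro y hy
      rw [interior_Ici] at hy
      have hy1 : (1:ℝ) < y := hy
      have hy0 : y ≠ 0 := by linarith
      exact (((hasDerivAt_id y).sub (hasDerivAt_inv hy0)).div_const 2 |>.sub
        (Real.hasDerivAt_log hy0)).differentiableAt.differentiableWithinAt
    · intro y hy
      rw [interior_Ici] at hy
      have hy1 : (1:ℝ) < y := hy
      have hy0 : y ≠ 0 := by linarith
      have hder : HasDerivAt g ((1 - -(y^2)⁻¹) / 2 - y⁻¹) y :=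
        (((hasDerivAt_id y).sub (hasDerivAt_inv hy0)).div_const 2).sub
          (Real.hasDerivAt_log hy0)
      rw [hder.deriv]
      have : (1 - -(y^2)⁻¹) / 2 - y⁻¹ = (y - 1)^2 / (2 * y^2) := by
        field_simp
        ring
      rw [this]
      positivity
  have := key (Set.self_mem_Ici) (Set.mem_Ici.mpr hu) hu
  simp only [hg] at this
  simp only [Real.log_one, inv_one] at this
  linarith

lemma term_ineq {y : ℝ} (hy : 0 < y) :
    (1 / 2) * (1 / y - 1 / (y + 1)) ≤ 1 / y - (Real.log (y + 1) - Real.log y) := by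
  have hu : (1:ℝ) ≤ (y + 1) / y := by
    rw [le_div_iff₀ hy]; linarith
  have h := log_le_half hu
  have hlog : Real.log ((y + 1) / y) = Real.log (y + 1) - Real.log y :=
    Real.log_div (by linarith) hy.ne'
  rw [hlog] at h
  have hinv : ((y + 1) / y)⁻¹ = y / (y + 1) := by rw [inv_div]
  rw [hinv] at h
  have : ((y + 1) / y - y / (y + 1)) / 2 = 1 / y - (1 / 2) * (1 / y - 1 / (y + 1)) := by
    field_simp
    ring
  linarith

lemma log_sub_digamma_lb {x : ℝ} (hx : 0 < x) :
    1 / (4 * x) ≤ Real.log x - digamma x := by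
  set n : ℕ := ⌈x⌉₊ with hn
  have hxn : (x : ℝ) ≤ n := Nat.le_ceil x
  -- ψ(x) = ψ(x+n) - Σ ≤ log(x+n) - Σ
  have hpos : 0 < x + n := by positivity
  have h1 : digamma x = digamma (x + n) - ∑ k ∈ Finset.range n, 1 / (x + k) := by
    rw [digamma_add_nat hx n]; ring
  have h2 : digamma (x + n) ≤ Real.log (x + n) := digamma_le_log hpos
  -- telescoping log
  have h3 : Real.log (x + n) - Real.log x
      = ∑ k ∈ Finset.range n, (Real.log (x + k + 1) - Real.log (x + k)) := by
    induction n with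
    | zero => simp
    | succ m ih =>
      rw [Finset.sum_range_succ, ← ih]
      push_cast
      ring_nf
  have h4 : ∀ k ∈ Finset.range n, (1/2) * (1/(x+(k:ℝ)) - 1/(x+((k:ℝ)+1)))
      ≤ 1/(x+(k:ℝ)) - (Real.log (x+(k:ℝ)+1) - Real.log (x+(k:ℝ))) := by
    intro k _
    have hk : (0:ℝ) < x + k := by positivity
    have := term_ineq hk
    convert this using 3 <;> ring
  have hsum : (1/2) * (1/x - 1/(x+n))
      ≤ (∑ k ∈ Finset.range n, 1 / (x + (k:ℝ))) - (Real.log (x+n) - Real.log x) := by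
    calc (1/2) * (1/x - 1/(x+(n:ℝ)))
        = ∑ k ∈ Finset.range n, (1/2) * (1/(x+(k:ℝ)) - 1/(x+((k:ℝ)+1))) := by
          rw [← Finset.mul_sum]
          congr 1
          have hts := Finset.sum_range_sub' (f := fun k : ℕ => 1/(x+(k:ℝ))) n
          push_cast at hts
          simp only [add_zero] at hts
          rw [← hts]
      _ ≤ ∑ k ∈ Finset.range n, (1/(x+(k:ℝ)) - (Real.log (x+(k:ℝ)+1) - Real.log (x+(k:ℝ)))) :=
          Finset.sum_le_sum h4
      _ = (∑ k ∈ Finset.range n, 1 / (x + (k:ℝ))) - (Real.log (x+n) - Real.log x) := by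
          rw [Finset.sum_sub_distrib, h3]
  have hfin : 1/(4*x) ≤ (1/2) * (1/x - 1/(x+n)) := by
    have h2x : 2*x ≤ x + n := by linarith
    have hle : 1/(x+n) ≤ 1/(2*x) := one_div_le_one_div_of_le (by positivity) h2x
    have e1 : 1/(2*x) = (1/2)*(1/x) := by field_simp
    have e2 : 1/(4*x) = (1/4)*(1/x) := by field_simp
    linarith
  calc 1/(4*x) ≤ (1/2) * (1/x - 1/(x+n)) := hfin
    _ ≤ (∑ k ∈ Finset.range n, 1 / (x + (k:ℝ))) - (Real.log (x+n) - Real.log x) := hsum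
    _ ≤ Real.log x - digamma x := by rw [h1]; linarith [h2]

theorem theta_alpha_not_completely_monotonic (α : ℝ) (hα : 1 < α) :
    Tendsto (fun x : ℝ => x ^ α * (Real.log x - digamma x)) atTop atTop ∧
    ¬ (ContDiffOn ℝ (⊤ : ℕ∞) (fun x : ℝ => x ^ α * (Real.log x - digamma x)) (Set.Ioi 0) ∧
      ∀ n : ℕ, ∀ x : ℝ, 0 < x →
        0 ≤ (-1 : ℝ) ^ n *
          iteratedDeriv n (fun x : ℝ => x ^ α * (Real.log x - digamma x)) x) := by
  set f : ℝ → ℝ := fun x : ℝ => x ^ α * (Real.log x - digamma x) with hf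
  have htend : Tendsto f atTop atTop := by
    have hlow : ∀ᶠ x in atTop, x^(α-1)/4 ≤ f x := by
      filter_upwards [eventually_gt_atTop (0:ℝ)] with x hx
      have hlb := log_sub_digamma_lb hx
      have hx4 : x ^ α * (1/(4*x)) = x^(α-1)/4 := by
        rw [Real.rpow_sub hx, Real.rpow_one, mul_one_div, div_div, mul_comm x 4]
      calc x^(α-1)/4 = x^α * (1/(4*x)) := hx4.symm
        _ ≤ x^α * (Real.log x - digamma x) :=
            mul_le_mul_of_nonneg_left hlb (Real.rpow_nonneg hx.le α)
    have hbase : Tendsto (fun x : ℝ => x^(α-1)/4) atTop atTop :=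
      (tendsto_rpow_atTop (by linarith)).atTop_div_const (by norm_num)
    exact tendsto_atTop_mono' _ hlow hbase
  refine ⟨htend, ?_⟩
  rintro ⟨hcd, hcm⟩
  have hderiv : ∀ x ∈ interior (Set.Ioi (0:ℝ)), deriv f x ≤ 0 := by
    intro x hx
    rw [interior_Ioi] at hx
    have h := hcm 1 x hx
    rw [pow_one, iteratedDeriv_one] at h
    linarith
  have hanti : AntitoneOn f (Set.Ioi 0) :=
    antitoneOn_of_deriv_nonpos (convex_Ioi 0) hcd.continuousOn
      (by rw [interior_Ioi]; exact hcd.differentiableOn (by simp)) hderiv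
  obtain ⟨x, hgt, hx1⟩ :=
    ((htend.eventually_gt_atTop (f 1)).and (eventually_ge_atTop (1:ℝ))).exists
  have := hanti (Set.mem_Ioi.mpr one_pos)
    (Set.mem_Ioi.mpr (lt_of_lt_of_le one_pos hx1)) hx1
  linarith
end
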